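/- arXiv:1212.3199 — 5 statements merged into one kernel-verified Lean document; each statement's English description precedes it below -/
import Mathlib

section
/- Let R be the ring of integers of a number field K. A nonzero fractional ideal 𝔞 of K cannot be written as a finite union 𝔞 = 𝔞₁ ∪ ⋯ ∪ 𝔞ₙ of fractional ideals 𝔞ᵢ unless 𝔞 = 𝔞ᵢ for some i. -/
/-!
If `𝔟ᵢ < 𝔞` are nonzero, then `𝔠 = 𝔞 · ∏ᵢ 𝔞⁻¹𝔟ᵢ` is a nonzero fractional ideal contained in every
`𝔟ᵢ`. In a Dedekind domain every nonzero `𝔠 ≤ 𝔞` admits some `y` with `𝔞 = 𝔠 + (y)`, and such a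
`y ∈ 𝔞` lies in no `𝔟ᵢ`, since otherwise `𝔞 ≤ 𝔟ᵢ`. Zero ideals contribute only `0` to the union.
-/

open FractionalIdeal
open scoped nonZeroDivisors

namespace FractionalIdeal

variable {R K : Type*} [CommRing R] [IsDedekindDomain R] [Field K] [Algebra R K]
  [IsFractionRing R K] {ι : Type*}

theorem exists_mem_forall_notMem_of_lt [Finite ι] {𝔞 : FractionalIdeal R⁰ K}
    {𝔟 : ι → FractionalIdeal R⁰ K} (h𝔞 : 𝔞 ≠ 0) (h𝔟 : ∀ i, 𝔟 i ≠ 0) (hlt : ∀ i, 𝔟 i < 𝔞) :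
    ∃ y ∈ 𝔞, ∀ i, y ∉ 𝔟 i := by
  have := Fintype.ofFinite ι
  set 𝔠 := 𝔞 * ∏ i, (𝔞⁻¹ * 𝔟 i)
  have hfactor : ∀ i, 𝔞⁻¹ * 𝔟 i ≤ 1 := fun i =>
    (mul_le_mul_right (hlt i).le _).trans (inv_mul_cancel₀ h𝔞).le
  have h𝔠𝔞 : 𝔠 ≤ 𝔞 :=
    (mul_le_mul_right (Finset.prod_le_one' fun i _ => hfactor i) _).trans (mul_one 𝔞).le
  have h𝔠𝔟 : ∀ i, 𝔠 ≤ 𝔟 i := by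
    intro i
    calc 𝔠 ≤ 𝔞 * ∏ j ∈ {i}, (𝔞⁻¹ * 𝔟 j) :=
          mul_le_mul_right (Finset.prod_le_prod_of_subset_of_le_one' (Finset.subset_univ _)
            fun j _ _ => hfactor j) _
      _ = 𝔟 i := by rw [Finset.prod_singleton, mul_inv_cancel_left₀ h𝔞]
  have h𝔠 : 𝔠 ≠ 0 := mul_ne_zero h𝔞 <| Finset.prod_ne_zero_iff.2 fun i _ =>
    mul_ne_zero (inv_ne_zero h𝔞) (h𝔟 i)
  obtain ⟨y, hy⟩ := IsDedekindDomain.exists_add_spanSingleton_mul_eq h𝔠𝔞 h𝔠 one_ne_zero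
  rw [mul_one, ← sup_eq_add] at hy
  refine ⟨y, hy ▸ le_sup_right (a := 𝔠) (mem_spanSingleton_self _ y), fun i hi => ?_⟩
  exact (hlt i).not_ge (hy ▸ sup_le (h𝔠𝔟 i) (spanSingleton_le_iff_mem.2 hi))

theorem coe_ne_iUnion_of_lt [Finite ι] {𝔞 : FractionalIdeal R⁰ K}
    {𝔟 : ι → FractionalIdeal R⁰ K} (h𝔞 : 𝔞 ≠ 0) (hlt : ∀ i, 𝔟 i < 𝔞) :
    (𝔞 : Set K) ≠ ⋃ i, (𝔟 i : Set K) := by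
  intro heq
  by_cases hzero : ∀ i, 𝔟 i = 0
  · obtain ⟨x, hx𝔞, hx⟩ := (Submodule.ne_bot_iff _).1 (coeToSubmodule_ne_bot.2 h𝔞)
    obtain ⟨i, hi⟩ := Set.mem_iUnion.1 (heq ▸ hx𝔞 : x ∈ ⋃ i, (𝔟 i : Set K))
    exact hx ((mem_zero_iff _).1 (hzero i ▸ hi))
  push Not at hzero
  obtain ⟨j, hj⟩ := hzero
  obtain ⟨y, hy𝔞, hy⟩ := exists_mem_forall_notMem_of_lt (𝔟 := fun i : {i // 𝔟 i ≠ 0} => 𝔟 i)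
    h𝔞 (fun i => i.2) (fun i => hlt i)
  obtain ⟨i, hi⟩ := Set.mem_iUnion.1 (heq ▸ hy𝔞 : y ∈ ⋃ i, (𝔟 i : Set K))
  by_cases hi0 : 𝔟 i = 0
  · have hy0 : y = 0 := (mem_zero_iff _).1 (hi0 ▸ hi)
    exact hy ⟨j, hj⟩ (hy0 ▸ zero_mem _)
  · exact hy ⟨i, hi0⟩ hi

end FractionalIdeal

/-- A nonzero fractional ideal of a number field is not a finite union of
fractional ideals unless it equals one of them. -/
theorem statement1 (K : Type*) [Field K] [NumberField K]
    (𝔞 : FractionalIdeal (nonZeroDivisors (NumberField.RingOfIntegers K)) K) (h𝔞 : 𝔞 ≠ 0)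
    (n : ℕ) (𝔟 : Fin n → FractionalIdeal (nonZeroDivisors (NumberField.RingOfIntegers K)) K)
    (h : (𝔞 : Set K) = ⋃ i, (𝔟 i : Set K)) :
    ∃ i, 𝔞 = 𝔟 i := by
  by_contra! hne
  have hle : ∀ i, 𝔟 i ≤ 𝔞 := fun i =>
    SetLike.coe_subset_coe.1 (h ▸ Set.subset_iUnion (fun i => (𝔟 i : Set K)) i)
  exact coe_ne_iUnion_of_lt h𝔞 (fun i => (hle i).lt_of_ne (hne i).symm) h
end

section
/- Let R be the ring of integers of a number field K and 𝔭 a nonzero prime ideal. Suppose 𝔞, 𝔞₁, …, 𝔞ₙ are fractional ideals of K with 𝔞 ∖ 𝔭𝔞 = ⋃_{i=1}^n (𝔞ᵢ ∖ 𝔭𝔞ᵢ) as subsets of K. Then there exists an index i with 𝔞 = 𝔞ᵢ. -/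
/-
The additive group `𝔟ᵢ` is covered by its proper subgroup `𝔭𝔟ᵢ` and by `𝔞`; as no group is the
union of two proper subgroups, `𝔟ᵢ ⊆ 𝔞`.
Conversely, take a nonzero `y` lying in `𝔭𝔞` and in every `𝔟ᵢ`; since `R` is Dedekind,
`𝔞 = Ry + Rx` for some `x`. Then `x ∉ 𝔭𝔞`, so `x ∈ 𝔟ⱼ` for some `j`, and `𝔞 = Ry + Rx ⊆ 𝔟ⱼ`.
-/

open IsDedekindDomain FractionalIdeal

open scoped nonZeroDivisors

section

variable {R K : Type*} [CommRing R] [Field K] [Algebra R K] [IsFractionRing R K]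

namespace FractionalIdeal

theorem exists_ne_zero_forall_algebraMap_mem [IsDomain R] {ι : Type*} [Fintype ι]
    {𝔠 : ι → FractionalIdeal R⁰ K} (h𝔠 : ∀ i, 𝔠 i ≠ 0) :
    ∃ r : R, r ≠ 0 ∧ ∀ i, algebraMap R K r ∈ 𝔠 i := by
  choose r hr0 hr using fun i => exists_ne_zero_mem_isInteger (h𝔠 i)
  refine ⟨∏ i, r i, Finset.prod_ne_zero_iff.mpr fun i _ => hr0 i, fun i => ?_⟩
  obtain ⟨c, hc⟩ := Finset.dvd_prod_of_mem r (Finset.mem_univ i)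
  rw [hc, mul_comm, map_mul, ← Algebra.smul_def]
  exact Submodule.smul_mem _ c (hr i)

variable [IsDedekindDomain R]

theorem coeIdeal_mul_lt_self {I : Ideal R} (hI : I ≠ ⊤) {𝔞 : FractionalIdeal R⁰ K}
    (h𝔞 : 𝔞 ≠ 0) : (I : FractionalIdeal R⁰ K) * 𝔞 < 𝔞 :=
  lt_of_le_of_ne (mul_le_of_le_one_left' coeIdeal_le_one)
    (by rwa [Ne, mul_eq_right₀ h𝔞, coeIdeal_eq_one, Ideal.one_eq_top])

theorem le_of_sdiff_coeIdeal_mul_subset {I : Ideal R} (hI : I ≠ ⊤) {𝔞 𝔟 : FractionalIdeal R⁰ K}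
    (h𝔟 : 𝔟 ≠ 0) (h : (𝔟 : Set K) \ ↑((I : FractionalIdeal R⁰ K) * 𝔟) ⊆ 𝔞) : 𝔟 ≤ 𝔞 := by
  have hcover := AddSubgroupClass.subset_union (H := (𝔟 : Submodule R K))
    (K := ((I : FractionalIdeal R⁰ K) * 𝔟 : FractionalIdeal R⁰ K)) (L := (𝔞 : Submodule R K))
  simp only [coe_le_coe] at hcover
  exact (hcover.mp (Set.sdiff_subset_iff.mp h)).resolve_left (coeIdeal_mul_lt_self hI h𝔟).not_ge

end FractionalIdeal

theorem IsDedekindDomain.exists_mem_forall_le_of_mem [IsDedekindDomain R] {ι : Type*}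
    [Fintype ι] {𝔞 : FractionalIdeal R⁰ K} (h𝔞 : 𝔞 ≠ 0) {𝔠 : ι → FractionalIdeal R⁰ K}
    (h𝔠 : ∀ i, 𝔠 i ≠ 0) : ∃ x ∈ 𝔞, ∀ i, x ∈ 𝔠 i → 𝔞 ≤ 𝔠 i := by
  obtain ⟨r, hr0, hr⟩ := exists_ne_zero_forall_algebraMap_mem h𝔠
  obtain ⟨s, hs0, hs⟩ := exists_ne_zero_mem_isInteger h𝔞
  have hrs : ∀ 𝔟 : FractionalIdeal R⁰ K, algebraMap R K r ∈ 𝔟 ∨ algebraMap R K s ∈ 𝔟 →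
      algebraMap R K (r * s) ∈ 𝔟 := by
    rintro 𝔟 (h | h)
    · rw [mul_comm, map_mul, ← Algebra.smul_def]
      exact Submodule.smul_mem _ s h
    · rw [map_mul, ← Algebra.smul_def]
      exact Submodule.smul_mem _ r h
  have hy0 : spanSingleton R⁰ (algebraMap R K (r * s)) ≠ 0 := by
    simpa [spanSingleton_eq_zero_iff] using ⟨hr0, hs0⟩
  obtain ⟨x, hx⟩ := exists_add_spanSingleton_mul_eq
    (spanSingleton_le_iff_mem.mpr (hrs 𝔞 (.inr hs))) hy0 one_ne_zero
  rw [mul_one, ← sup_eq_add] at hx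
  refine ⟨x, spanSingleton_le_iff_mem.mp (hx ▸ le_sup_right), fun i hxi => hx ▸ ?_⟩
  exact sup_le (spanSingleton_le_iff_mem.mpr (hrs _ (.inl (hr i))))
    (spanSingleton_le_iff_mem.mpr hxi)

end

/-- Independence of the family `𝒥({𝔭})`: if
`𝔞 ∖ 𝔭𝔞 = ⋃ᵢ (𝔞ᵢ ∖ 𝔭𝔞ᵢ)` then `𝔞 = 𝔞ᵢ` for some `i`. -/
theorem statement5 (K : Type*) [Field K] [NumberField K]
    (𝔭 : HeightOneSpectrum (NumberField.RingOfIntegers K))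
    (𝔞 : FractionalIdeal (nonZeroDivisors (NumberField.RingOfIntegers K)) K) (h𝔞 : 𝔞 ≠ 0)
    (n : ℕ) (𝔟 : Fin n → FractionalIdeal (nonZeroDivisors (NumberField.RingOfIntegers K)) K)
    (h𝔟 : ∀ i, 𝔟 i ≠ 0)
    (h : (𝔞 : Set K) \ ((((𝔭.asIdeal :
        FractionalIdeal (nonZeroDivisors (NumberField.RingOfIntegers K)) K)) * 𝔞) : Set K)
      = ⋃ i, ((𝔟 i : Set K) \ ((((𝔭.asIdeal :
        FractionalIdeal (nonZeroDivisors (NumberField.RingOfIntegers K)) K)) * 𝔟 i) : Set K))) :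
    ∃ i, 𝔞 = 𝔟 i := by
  have h𝔭𝔞 := coeIdeal_mul_lt_self 𝔭.isPrime.ne_top h𝔞
  have h𝔟𝔞 (i : Fin n) : 𝔟 i ≤ 𝔞 :=
    le_of_sdiff_coeIdeal_mul_subset 𝔭.isPrime.ne_top (h𝔟 i)
      (((Set.subset_iUnion _ i).trans h.symm.subset).trans Set.sdiff_subset)
  obtain ⟨x, hx𝔞, hx⟩ := exists_mem_forall_le_of_mem h𝔞
    (𝔠 := fun o => o.elim ((𝔭.asIdeal : FractionalIdeal _ K) * 𝔞) 𝔟)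
    fun | none => mul_ne_zero (coeIdeal_ne_zero.mpr 𝔭.ne_bot) h𝔞 | some i => h𝔟 i
  have hx𝔭𝔞 : x ∉ (𝔭.asIdeal : FractionalIdeal _ K) * 𝔞 :=
    fun hx𝔭 => (hx none hx𝔭).not_gt h𝔭𝔞
  obtain ⟨i, hxi, -⟩ := Set.mem_iUnion.mp (h.subset ⟨hx𝔞, hx𝔭𝔞⟩)
  exact ⟨i, (hx (some i) hxi).antisymm (h𝔟𝔞 i)⟩
end

section
/- Let R be the ring of integers of a number field K. Every nonzero fractional ideal 𝔞 of K can be written as 𝔞 = aR ∩ cR for suitable nonzero elements a, c ∈ K. -/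
open FractionalIdeal
open scoped nonZeroDivisors

/-!
In a Dedekind domain every nonzero (fractional) ideal is generated by two elements, so
`𝔞⁻¹ = uR + vR` with `u, v ≠ 0`. Inversion turns sums of nonzero fractional ideals into
intersections, and `(uR)⁻¹ = u⁻¹R`; hence `𝔞 = (𝔞⁻¹)⁻¹ = u⁻¹R ∩ v⁻¹R`.
-/

namespace FractionalIdeal

variable {R : Type*} [CommRing R] {K : Type*} [Field K] [Algebra R K]

theorem inv_add_eq_inf [IsDomain R] [IsFractionRing R K] {I J : FractionalIdeal R⁰ K}
    (hI : I ≠ 0) (hJ : J ≠ 0) : (I + J)⁻¹ = I⁻¹ ⊓ J⁻¹ := by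
  have hIJ : I + J ≠ 0 := fun h ↦ hI (le_zero_iff.mp (h ▸ le_self_add))
  refine eq_of_forall_le_iff fun L ↦ ?_
  rw [le_inf_iff, inv_eq, inv_eq, inv_eq, le_div_iff_mul_le hI, le_div_iff_mul_le hJ,
    le_div_iff_mul_le hIJ, mul_add, ← sup_eq_add, sup_le_iff]

theorem exists_eq_spanSingleton_add_spanSingleton [IsDedekindDomain R] [IsFractionRing R K]
    {I : FractionalIdeal R⁰ K} (hI : I ≠ 0) :
    ∃ u v : K, u ≠ 0 ∧ v ≠ 0 ∧ I = spanSingleton R⁰ u + spanSingleton R⁰ v := by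
  obtain ⟨u, huI, hu⟩ := Submodule.exists_mem_ne_zero_of_ne_bot (coeToSubmodule_ne_bot.mpr hI)
  obtain ⟨x, hx⟩ := IsDedekindDomain.exists_add_spanSingleton_mul_eq
    (spanSingleton_le_iff_mem.mpr huI) (spanSingleton_ne_zero_iff.mpr hu) one_ne_zero
  rw [mul_one] at hx
  by_cases hx0 : x = 0
  · refine ⟨u, u, hu, hu, ?_⟩
    rw [← hx, hx0, spanSingleton_zero, add_zero, ← sup_eq_add, sup_idem]
  · exact ⟨u, x, hu, hx0, hx.symm⟩

end FractionalIdeal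

/-- Every nonzero fractional ideal of a number field is the intersection
of two principal fractional ideals. -/
theorem statement7 (K : Type*) [Field K] [NumberField K]
    (𝔞 : FractionalIdeal (nonZeroDivisors (NumberField.RingOfIntegers K)) K) (h𝔞 : 𝔞 ≠ 0) :
    ∃ a c : K, a ≠ 0 ∧ c ≠ 0 ∧
      𝔞 = spanSingleton (nonZeroDivisors (NumberField.RingOfIntegers K)) a
        ⊓ spanSingleton (nonZeroDivisors (NumberField.RingOfIntegers K)) c := by
  obtain ⟨u, v, hu, hv, h𝔞inv⟩ := exists_eq_spanSingleton_add_spanSingleton (inv_ne_zero h𝔞)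
  refine ⟨u⁻¹, v⁻¹, inv_ne_zero hu, inv_ne_zero hv, ?_⟩
  rw [← inv_inv 𝔞, h𝔞inv, inv_add_eq_inf (spanSingleton_ne_zero_iff.mpr hu)
    (spanSingleton_ne_zero_iff.mpr hv), spanSingleton_inv, spanSingleton_inv]
end

section
/- Let G be a group, H ≤ G a subgroup of finite index N, and let τ^G and τ^H denote the canonical traces on the complex group algebras ℂ[G] and ℂ[H] (τ(Σ λ_g g) = λ_e). If M is a finitely generated projective right ℂ[G]-module represented by an idempotent matrix e over ℂ[G], and M|_{ℂ[H]} is its restriction to ℂ[H] (a finitely generated projective ℂ[H]-module), then the τ^H-trace of M|_{ℂ[H]} equals N times the τ^G-trace of M. -/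
open MonoidAlgebra Matrix

/-- The canonical trace on a complex group algebra: the coefficient at the identity. -/
noncomputable def tau {G : Type*} [Group G] (x : MonoidAlgebra ℂ G) : ℂ := x.coeff 1

/-- The inclusion `ℂ[H] → ℂ[G]` induced by a subgroup `H ≤ G`. -/
noncomputable def incl {G : Type*} [Group G] (H : Subgroup G) :
    MonoidAlgebra ℂ H →+* MonoidAlgebra ℂ G :=
  MonoidAlgebra.mapDomainRingHom ℂ H.subtype

/-- Restriction of scalars along `ℂ[H] → ℂ[G]`. -/
noncomputable instance moduleRes {G : Type*} [Group G] (H : Subgroup G) :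
    Module (MonoidAlgebra ℂ H) (MonoidAlgebra ℂ G) :=
  Module.compHom _ (incl H)

/-- Row-multiplication by a square matrix over a ring, as a linear map of left modules. -/
noncomputable def vecMulLin {A : Type*} [Ring A] {k : ℕ} (e : Matrix (Fin k) (Fin k) A) :
    (Fin k → A) →ₗ[A] (Fin k → A) where
  toFun v := v ᵥ* e
  map_add' x y := by
    ext j
    simp [Matrix.vecMul, dotProduct, add_mul, Finset.sum_add_distrib]
  map_smul' c x := by
    ext j
    simp [Matrix.vecMul, dotProduct, Finset.mul_sum, mul_assoc]

/-- Row-multiplication by a matrix over `ℂ[G]`, as a `ℂ[H]`-linear map (restriction of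
scalars): its range is the restriction to `ℂ[H]` of the f.g. projective right `ℂ[G]`-module
determined by the idempotent matrix. -/
noncomputable def resVecMul {G : Type*} [Group G] (H : Subgroup G) {k : ℕ}
    (e : Matrix (Fin k) (Fin k) (MonoidAlgebra ℂ G)) :
    (Fin k → MonoidAlgebra ℂ G) →ₗ[MonoidAlgebra ℂ H] (Fin k → MonoidAlgebra ℂ G) where
  toFun v := v ᵥ* e
  map_add' x y := by
    ext j
    simp [Matrix.vecMul, dotProduct, add_mul, Finset.sum_add_distrib]
  map_smul' c x := by
    funext j
    show ((fun i => incl H c * x i) ᵥ* e) j = incl H c * ((x ᵥ* e) j)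
    simp [Matrix.vecMul, dotProduct, Finset.mul_sum, mul_assoc]

/-!
Choosing representatives of the right cosets of `H` makes `ℂ[G]` a free `ℂ[H]`-module of rank `N`,
so `M|_{ℂ[H]}` is the image of an idempotent `kN × kN` matrix `P` over `ℂ[H]`. The diagonal entry
of `P` at `(i, q)` is the `q`-th coordinate of `q.out * e i i`, whose coefficient at `1` is the
coefficient of `e i i` at `1`; hence `τ^H(P) = N τ^G(e)`. Since `τ^H(ab) = τ^H(ba)`, idempotent
matrices with isomorphic images have the same trace: an isomorphism of the images factors them as
`P = ab` and `f = ba`.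
-/

theorem MonoidAlgebra.coeff_one_mul_comm {k G : Type*} [CommSemiring k] [Group G]
    (x y : MonoidAlgebra k G) : (x * y).coeff 1 = (y * x).coeff 1 := by
  induction x using MonoidAlgebra.induction_linear with
  | zero => simp
  | add a b ha hb => simp [add_mul, mul_add, ha, hb]
  | single g c =>
    induction y using MonoidAlgebra.induction_linear with
    | zero => simp
    | add a b ha hb => simp [add_mul, mul_add, ha, hb]
    | single g' c' =>
      classical
      simp only [single_mul_single, coeff_single, Finsupp.single_apply, mul_eq_one_comm,
        mul_comm c c']

theorem AddMonoidHom.map_trace_mul_comm {B A m n : Type*} [Semiring B] [AddCommMonoid A]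
    [Fintype m] [Fintype n] (t : B →+ A) (ht : ∀ x y, t (x * y) = t (y * x))
    (M : Matrix m n B) (N : Matrix n m B) : t (M * N).trace = t (N * M).trace := by
  simp only [Matrix.trace, Matrix.diag, Matrix.mul_apply, map_sum]
  rw [Finset.sum_comm]
  simp only [ht]

theorem IsIdempotentElem.rangeRestrict_coe {R M : Type*} [Ring R] [AddCommGroup M]
    [Module R M] {p : Module.End R M} (hp : IsIdempotentElem p) (y : LinearMap.range p) :
    p.rangeRestrict y = y :=
  Subtype.ext ((LinearMap.IsIdempotentElem.mem_range_iff hp).mp y.2)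

theorem IsIdempotentElem.toLinearMapRight' {A m : Type*} [Semiring A] [Fintype m]
    [DecidableEq m] {f : Matrix m m A} (hf : IsIdempotentElem f) :
    IsIdempotentElem f.toLinearMapRight' := by
  rw [IsIdempotentElem, Module.End.mul_eq_comp, ← Matrix.toLinearMapRight'_mul, hf.eq]

theorem LinearEquiv.range_conjRingEquiv {R M M₂ : Type*} [Semiring R] [AddCommMonoid M]
    [AddCommMonoid M₂] [Module R M] [Module R M₂] (e : M ≃ₗ[R] M₂) (p : Module.End R M) :
    LinearMap.range (e.conjRingEquiv p) = (LinearMap.range p).map (e : M →ₗ[R] M₂) := by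
  change LinearMap.range ((e : M →ₗ[R] M₂) ∘ₗ p ∘ₗ (e.symm : M₂ →ₗ[R] M)) = _
  rw [LinearMap.range_comp, LinearMap.range_comp, LinearEquiv.range, Submodule.map_top]

theorem map_trace_toMatrixRight'_eq_of_rangeEquiv {B A ι κ : Type*} [Ring B] [AddCommMonoid A]
    [Fintype ι] [DecidableEq ι] [Fintype κ] [DecidableEq κ]
    (t : B →+ A) (ht : ∀ x y, t (x * y) = t (y * x))
    {p : Module.End B (ι → B)} {q : Module.End B (κ → B)}
    (hp : IsIdempotentElem p) (hq : IsIdempotentElem q)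
    (φ : LinearMap.range p ≃ₗ[B] LinearMap.range q) :
    t (LinearMap.toMatrixRight' p).trace = t (LinearMap.toMatrixRight' q).trace := by
  set α := (LinearMap.range q).subtype ∘ₗ φ.toLinearMap ∘ₗ p.rangeRestrict
  set β := (LinearMap.range p).subtype ∘ₗ φ.symm.toLinearMap ∘ₗ q.rangeRestrict
  have hβα : β ∘ₗ α = p := LinearMap.ext fun x => by simp [β, α, hq.rangeRestrict_coe]
  have hαβ : α ∘ₗ β = q := LinearMap.ext fun x => by simp [β, α, hp.rangeRestrict_coe]
  rw [← hβα, ← hαβ, LinearMap.toMatrixRight'_comp, LinearMap.toMatrixRight'_comp,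
    t.map_trace_mul_comm ht]

noncomputable def tauAddHom (G : Type*) [Group G] : MonoidAlgebra ℂ G →+ ℂ where
  toFun := tau
  map_zero' := rfl
  map_add' _ _ := rfl

@[simp]
theorem tauAddHom_apply {G : Type*} [Group G] (x : MonoidAlgebra ℂ G) :
    tauAddHom G x = tau x := rfl

theorem tauAddHom_trace {G ι : Type*} [Group G] [Fintype ι] (M : Matrix ι ι (MonoidAlgebra ℂ G)) :
    tauAddHom G M.trace = ∑ i, tau (M i i) := by
  simp [Matrix.trace]

theorem tau_mul_comm {G : Type*} [Group G] (x y : MonoidAlgebra ℂ G) :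
    tau (x * y) = tau (y * x) :=
  MonoidAlgebra.coeff_one_mul_comm x y

theorem resVecMul_isIdempotentElem {G : Type*} [Group G] (H : Subgroup G) {k : ℕ}
    {e : Matrix (Fin k) (Fin k) (MonoidAlgebra ℂ G)} (he : IsIdempotentElem e) :
    IsIdempotentElem (resVecMul H e) :=
  LinearMap.ext fun v => show (v ᵥ* e) ᵥ* e = v ᵥ* e by rw [vecMul_vecMul, he.eq]

namespace Subgroup

variable {G : Type*} [Group G] (H : Subgroup G)

noncomputable def quotientRightRelProdEquiv : Quotient (QuotientGroup.rightRel H) × H ≃ G where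
  toFun p := p.2 * p.1.out
  invFun g := (⟦g⟧, ⟨g * (⟦g⟧ : Quotient (QuotientGroup.rightRel H)).out⁻¹,
    QuotientGroup.rightRel_apply.mp (Quotient.exact (Quotient.out_eq _))⟩)
  left_inv := fun ⟨q, h⟩ => by
    have hq : (⟦(h : G) * q.out⟧ : Quotient (QuotientGroup.rightRel H)) = q := by
      conv_rhs => rw [← q.out_eq]
      exact Quotient.sound (QuotientGroup.rightRel_apply.mpr (by simp))
    simp [hq]
  right_inv g := by simp

@[simp]
theorem quotientRightRelProdEquiv_apply (p : Quotient (QuotientGroup.rightRel H) × H) :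
    H.quotientRightRelProdEquiv p = p.2 * p.1.out := rfl

theorem nat_card_quotientRightRel : Nat.card (Quotient (QuotientGroup.rightRel H)) = H.index :=
  (Nat.card_congr (QuotientGroup.quotientRightRelEquivQuotientLeftRel H)).trans
    H.index_eq_card.symm

end Subgroup

section CosetCoordinates

variable {G : Type*} [Group G] (H : Subgroup G)

local notation "Q" => Quotient (QuotientGroup.rightRel H)

theorem incl_single (h : H) (a : ℂ) : incl H (single h a) = single (h : G) a := by
  simp [incl]

theorem moduleRes_smul_def (c : MonoidAlgebra ℂ H) (x : MonoidAlgebra ℂ G) :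
    c • x = incl H c * x := rfl

variable [Finite (Quotient (QuotientGroup.rightRel H))]

noncomputable def cosetCoordAddEquiv : MonoidAlgebra ℂ G ≃+ (Q → MonoidAlgebra ℂ H) :=
  coeffAddEquiv.trans <| (Finsupp.domCongr H.quotientRightRelProdEquiv.symm).trans <|
    Finsupp.curryAddEquiv.trans <| (Finsupp.mapRange.addEquiv coeffAddEquiv.symm).trans
      (Finsupp.linearEquivFunOnFinite ℂ _ Q).toAddEquiv

theorem cosetCoordAddEquiv_apply_coeff (x : MonoidAlgebra ℂ G) (q : Q) (h : H) :
    (cosetCoordAddEquiv H x q).coeff h = x.coeff (h * q.out) := by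
  simp [cosetCoordAddEquiv]

theorem cosetCoordAddEquiv_smul (c : MonoidAlgebra ℂ H) (x : MonoidAlgebra ℂ G) :
    cosetCoordAddEquiv H (c • x) = c • cosetCoordAddEquiv H x := by
  induction c using MonoidAlgebra.induction_linear with
  | zero => simp
  | add a b ha hb => rw [add_smul, map_add, ha, hb, add_smul]
  | single h a =>
    funext q
    ext h'
    simp [moduleRes_smul_def, incl_single, cosetCoordAddEquiv_apply_coeff, mul_assoc]

noncomputable def cosetCoordEquiv :
    MonoidAlgebra ℂ G ≃ₗ[MonoidAlgebra ℂ H] (Q → MonoidAlgebra ℂ H) :=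
  (cosetCoordAddEquiv H).toLinearEquiv (cosetCoordAddEquiv_smul H)

@[simp]
theorem cosetCoordEquiv_apply_coeff (x : MonoidAlgebra ℂ G) (q : Q) (h : H) :
    (cosetCoordEquiv H x q).coeff h = x.coeff (h * q.out) :=
  cosetCoordAddEquiv_apply_coeff H x q h

theorem cosetCoordEquiv_single_out [DecidableEq Q] (q : Q) :
    cosetCoordEquiv H (single q.out 1) = Pi.single q 1 := by
  funext q'
  ext h
  rcases eq_or_ne q' q with rfl | hq
  · classical simp [one_def, coeff_single, Finsupp.single_apply, eq_comm]
  · have hne : (h : G) * q'.out ≠ q.out := fun heq => hq <| congrArg Prod.fst <|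
      H.quotientRightRelProdEquiv.injective (a₁ := (q', h)) (a₂ := (q, 1)) (by simpa using heq)
    simp [coeff_single, hne, hq]

theorem tau_cosetCoordEquiv_single_out_mul (q : Q) (x : MonoidAlgebra ℂ G) :
    tau (cosetCoordEquiv H (single q.out 1 * x) q) = tau x := by
  simp [tau]

noncomputable def resCoordEquiv (ι : Type*) :
    (ι → MonoidAlgebra ℂ G) ≃ₗ[MonoidAlgebra ℂ H] (ι × Q → MonoidAlgebra ℂ H) :=
  (LinearEquiv.piCongrRight fun _ => cosetCoordEquiv H).trans
    (LinearEquiv.curry (MonoidAlgebra ℂ H) (MonoidAlgebra ℂ H) ι Q).symm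

theorem resCoordEquiv_symm_single {ι : Type*} [DecidableEq ι] [DecidableEq Q] (i : ι) (q : Q) :
    (resCoordEquiv H ι).symm (Pi.single (i, q) 1) = Pi.single i (single q.out 1) := by
  rw [LinearEquiv.symm_apply_eq]
  funext ⟨i', q'⟩
  rcases eq_or_ne i' i with rfl | hi
  · simp [resCoordEquiv, cosetCoordEquiv_single_out, Pi.single_apply]
  · simp [resCoordEquiv, hi]

theorem tau_trace_toMatrixRight'_conj_resVecMul [Fintype Q] [DecidableEq Q] {k : ℕ}
    (e : Matrix (Fin k) (Fin k) (MonoidAlgebra ℂ G)) :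
    tauAddHom H (LinearMap.toMatrixRight'
        ((resCoordEquiv H (Fin k)).conjRingEquiv (resVecMul H e))).trace =
      Fintype.card Q * ∑ i, tau (e i i) := by
  have diag (i : Fin k) (q : Q) :
      LinearMap.toMatrixRight' ((resCoordEquiv H (Fin k)).conjRingEquiv (resVecMul H e))
        (i, q) (i, q) = cosetCoordEquiv H (single q.out 1 * e i i) q := by
    change resCoordEquiv H (Fin k)
      (resVecMul H e ((resCoordEquiv H (Fin k)).symm (Pi.single (i, q) 1))) (i, q) = _
    rw [resCoordEquiv_symm_single]
    simp [resVecMul, resCoordEquiv]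
  rw [tauAddHom_trace, Fintype.sum_prod_type]
  simp only [diag, tau_cosetCoordEquiv_single_out_mul, Finset.sum_const, Finset.card_univ,
    nsmul_eq_mul, Finset.mul_sum]

end CosetCoordinates

/-- If `H ≤ G` has finite index `N`, `e` is an idempotent matrix over `ℂ[G]`
representing the f.g. projective module `M`, and `f` is an idempotent matrix over `ℂ[H]`
representing the restriction `M|_{ℂ[H]}`, then `τ^H(f) = N · τ^G(e)`. -/
theorem statement15 {G : Type*} [Group G] (H : Subgroup G) (N : ℕ)
    (hN : H.index = N) (hN0 : N ≠ 0)
    {k l : ℕ} (e : Matrix (Fin k) (Fin k) (MonoidAlgebra ℂ G)) (he : IsIdempotentElem e)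
    (f : Matrix (Fin l) (Fin l) (MonoidAlgebra ℂ H)) (hf : IsIdempotentElem f)
    (iso : Nonempty (LinearMap.range (resVecMul H e)
      ≃ₗ[MonoidAlgebra ℂ H] LinearMap.range (vecMulLin f))) :
    ∑ i, tau (f i i) = N * ∑ i, tau (e i i) := by
  classical
  obtain ⟨φ⟩ := iso
  have hcard : Nat.card (Quotient (QuotientGroup.rightRel H)) = N :=
    H.nat_card_quotientRightRel.trans hN
  have : Finite (Quotient (QuotientGroup.rightRel H)) := Nat.finite_of_card_ne_zero (hcard ▸ hN0)
  let _ := Fintype.ofFinite (Quotient (QuotientGroup.rightRel H))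
  let Ψ := resCoordEquiv H (Fin k)
  have key := map_trace_toMatrixRight'_eq_of_rangeEquiv (tauAddHom H) tau_mul_comm
    ((resVecMul_isIdempotentElem H he).map Ψ.conjRingEquiv) hf.toLinearMapRight'
    ((LinearEquiv.ofEq _ _ (Ψ.range_conjRingEquiv _)).trans ((Ψ.submoduleMap _).symm.trans φ))
  rwa [tau_trace_toMatrixRight'_conj_resVecMul, LinearEquiv.apply_symm_apply, tauAddHom_trace,
    Fintype.card_eq_nat_card, hcard, eq_comm] at key
end

section
/- Let R be the ring of integers of a number field K and 𝔭 a nonzero prime ideal. For any nonzero ideal 𝔞 of R, write 𝔞 = 𝔭^v · 𝔞′ with v = v_𝔭(𝔞) and 𝔞′ coprime to 𝔭. Then there exist a, c ∈ K× with v_𝔭(a) = v such that 𝔭^v = aR ∩ cR, and moreover a(R ∖ 𝔭) ∩ cR = 𝔭^v ∖ 𝔭^{v+1} as subsets of K. -/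
open IsDedekindDomain FractionalIdeal
open scoped nonZeroDivisors

/-- Writing a nonzero ideal `𝔞 = 𝔭^v 𝔞′` with `𝔞′` coprime to `𝔭`, there are
`a, c ∈ K×` with `v_𝔭(a) = v`, `𝔭^v = aR ∩ cR`, and `a(R ∖ 𝔭) ∩ cR = 𝔭^v ∖ 𝔭^{v+1}`. -/
theorem statement16 (K : Type*) [Field K] [NumberField K]
    (𝔭 : HeightOneSpectrum (NumberField.RingOfIntegers K))
    (𝔞 : Ideal (NumberField.RingOfIntegers K)) (h𝔞 : 𝔞 ≠ 0)
    (v : ℕ) (𝔞' : Ideal (NumberField.RingOfIntegers K))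
    (hfac : 𝔞 = 𝔭.asIdeal ^ v * 𝔞') (hcop : ¬ 𝔞' ≤ 𝔭.asIdeal) :
    ∃ a c : K, a ≠ 0 ∧ c ≠ 0 ∧
      count K 𝔭 (spanSingleton (nonZeroDivisors (NumberField.RingOfIntegers K)) a) = (v : ℤ) ∧
      ((𝔭.asIdeal ^ v : Ideal (NumberField.RingOfIntegers K)) :
          FractionalIdeal (nonZeroDivisors (NumberField.RingOfIntegers K)) K)
        = spanSingleton (nonZeroDivisors (NumberField.RingOfIntegers K)) a
          ⊓ spanSingleton (nonZeroDivisors (NumberField.RingOfIntegers K)) c ∧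
      {x : K | ∃ r : NumberField.RingOfIntegers K, r ∉ 𝔭.asIdeal ∧
          x = a * algebraMap (NumberField.RingOfIntegers K) K r}
        ∩ ((spanSingleton (nonZeroDivisors (NumberField.RingOfIntegers K)) c :
            FractionalIdeal (nonZeroDivisors (NumberField.RingOfIntegers K)) K) : Set K)
        = (((𝔭.asIdeal ^ v : Ideal (NumberField.RingOfIntegers K)) :
            FractionalIdeal (nonZeroDivisors (NumberField.RingOfIntegers K)) K) : Set K)
          \ (((𝔭.asIdeal ^ (v + 1) : Ideal (NumberField.RingOfIntegers K)) :
            FractionalIdeal (nonZeroDivisors (NumberField.RingOfIntegers K)) K) : Set K) := by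
  classical
  set R := NumberField.RingOfIntegers K with hRdef
  haveI : 𝔭.asIdeal.IsPrime := 𝔭.isPrime
  have hinj : Function.Injective (algebraMap R K) := IsFractionRing.injective R K
  -- choose x0 ∈ 𝔭^v \ 𝔭^(v+1)
  have hlt : 𝔭.asIdeal ^ (v + 1) < 𝔭.asIdeal ^ v := Ideal.pow_succ_lt_pow 𝔭.ne_bot v
  obtain ⟨x0, hx0v, hx0v1⟩ := SetLike.exists_of_lt hlt
  have hx0ne : x0 ≠ 0 := by
    rintro rfl; exact hx0v1 (Ideal.zero_mem _)
  have hdvd : 𝔭.asIdeal ^ v ∣ Ideal.span {x0} :=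
    Ideal.dvd_iff_le.mpr ((Ideal.span_singleton_le_iff_mem _).mpr hx0v)
  obtain ⟨𝔟, h𝔟⟩ := hdvd
  have h𝔟𝔭 : ¬ 𝔟 ≤ 𝔭.asIdeal := by
    intro hle
    apply hx0v1
    have hdvd' : 𝔭.asIdeal ^ (v + 1) ∣ Ideal.span {x0} := by
      rw [h𝔟, pow_succ]
      exact mul_dvd_mul dvd_rfl (Ideal.dvd_iff_le.mpr hle)
    exact (Ideal.span_singleton_le_iff_mem _).mp (Ideal.le_of_dvd hdvd')
  obtain ⟨y, hy𝔟, hy𝔭⟩ := SetLike.not_le_iff_exists.mp h𝔟𝔭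
  have hyne : y ≠ 0 := by rintro rfl; exact hy𝔭 (Ideal.zero_mem _)
  have hy' : algebraMap R K y ≠ 0 := fun h => hyne (hinj (by simpa using h))
  have hx0' : algebraMap R K x0 ≠ 0 := fun h => hx0ne (hinj (by simpa using h))
  set a : K := algebraMap R K x0 / algebraMap R K y with hadef
  have hane : a ≠ 0 := div_ne_zero hx0' hy'
  -- primary property of 𝔭 ^ k
  have hprim : ∀ (k : ℕ) (s : R), y * s ∈ 𝔭.asIdeal ^ k → s ∈ 𝔭.asIdeal ^ k := by
    intro k s hs
    exact (Ideal.IsPrime.mul_mem_pow _ hs).resolve_left hy𝔭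
  -- s ∈ 𝔭^k → y * s ∈ 𝔭^k * 𝔟
  have hys : ∀ (k : ℕ) (s : R), s ∈ 𝔭.asIdeal ^ k → y * s ∈ 𝔭.asIdeal ^ k * 𝔟 := by
    intro k s hs
    rw [mul_comm (𝔭.asIdeal ^ k) 𝔟]
    exact Ideal.mul_mem_mul hy𝔟 hs
  -- the key equivalences
  have key1 : ∀ s : R, s ∈ 𝔭.asIdeal ^ v ↔ ∃ r : R, y * s = x0 * r := by
    intro s
    constructor
    · intro hs
      have : y * s ∈ Ideal.span {x0} := by rw [h𝔟]; exact hys v s hs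
      exact Ideal.mem_span_singleton.mp this
    · rintro ⟨r, hr⟩
      apply hprim v
      rw [hr]
      exact Ideal.mul_mem_right _ _ hx0v
  have key2 : ∀ (r s : R), y * s = x0 * r → (s ∈ 𝔭.asIdeal ^ (v + 1) ↔ r ∈ 𝔭.asIdeal) := by
    intro r s hrs
    constructor
    · intro hs
      have h1 : y * s ∈ Ideal.span {x0} * 𝔭.asIdeal := by
        have := hys (v + 1) s hs
        rwa [pow_succ, mul_assoc, mul_comm 𝔭.asIdeal 𝔟, ← mul_assoc, ← h𝔟] at this
      obtain ⟨t, ht, h2⟩ := Ideal.mem_span_singleton_mul.mp h1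
      have : x0 * t = x0 * r := by rw [h2, hrs]
      rwa [← mul_left_cancel₀ hx0ne this]
    · intro hr
      apply hprim (v + 1)
      rw [hrs, pow_succ]
      exact Ideal.mul_mem_mul hx0v hr
  -- the link between `a` and the equation `y * s = x0 * r`
  have hlink : ∀ r s : R, (algebraMap R K s = a * algebraMap R K r ↔ y * s = x0 * r) := by
    intro r s
    rw [hadef, div_mul_eq_mul_div, eq_div_iff hy', ← _root_.map_mul, ← _root_.map_mul, hinj.eq_iff,
      mul_comm s y]
  refine ⟨a, 1, hane, one_ne_zero, ?_, ?_, ?_⟩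
  · -- count
    have h𝔟ne : 𝔟 ≠ 0 := by
      rintro rfl
      rw [mul_zero] at h𝔟
      exact hx0ne (by simpa using Ideal.span_singleton_eq_bot.mp h𝔟)
    have hyIne : Ideal.span {y} ≠ (0 : Ideal R) := by
      simpa using Ideal.span_singleton_eq_bot.not.mpr hyne
    have hsy : spanSingleton R⁰ a * ((Ideal.span {y} : Ideal R) : FractionalIdeal R⁰ K)
        = ((Ideal.span {x0} : Ideal R) : FractionalIdeal R⁰ K) := by
      rw [coeIdeal_span_singleton, coeIdeal_span_singleton, spanSingleton_mul_spanSingleton,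
        hadef, div_mul_cancel₀ _ hy']
    have hcy : count K 𝔭 ((Ideal.span {y} : Ideal R) : FractionalIdeal R⁰ K) = 0 := by
      rw [count_coe K 𝔭 hyIne, Nat.cast_eq_zero]
      by_contra h
      exact hy𝔭 (Ideal.le_of_dvd ((Associates.count_ne_zero_iff_dvd hyIne
        𝔭.irreducible).mp h) (Ideal.mem_span_singleton_self y))
    have hcb : count K 𝔭 ((𝔟 : Ideal R) : FractionalIdeal R⁰ K) = 0 := by
      rw [count_coe K 𝔭 h𝔟ne, Nat.cast_eq_zero]
      by_contra h
      exact h𝔟𝔭 (Ideal.le_of_dvd ((Associates.count_ne_zero_iff_dvd h𝔟ne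
        𝔭.irreducible).mp h))
    have hcx : count K 𝔭 ((Ideal.span {x0} : Ideal R) : FractionalIdeal R⁰ K) = (v : ℤ) := by
      rw [h𝔟, coeIdeal_mul, count_mul K 𝔭 (by
          rw [ne_eq, coeIdeal_eq_zero]
          exact pow_ne_zero v 𝔭.ne_bot) (by rwa [ne_eq, coeIdeal_eq_zero]),
        hcb, add_zero, coeIdeal_pow, count_pow_self]
    have hsane : spanSingleton R⁰ a ≠ 0 := by
      rwa [ne_eq, spanSingleton_eq_zero_iff]
    have := count_mul K 𝔭 hsane (by rwa [ne_eq, coeIdeal_eq_zero])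
    rw [hsy, hcx, hcy, add_zero] at this
    exact this.symm
  · -- 𝔭^v = aR ⊓ R
    rw [spanSingleton_one]
    have hmem_inf : ∀ (I J : FractionalIdeal R⁰ K) (x : K), x ∈ I ⊓ J ↔ x ∈ I ∧ x ∈ J := by
      intro I J x
      rw [← mem_coe, coe_inf, Submodule.mem_inf, mem_coe, mem_coe]
    apply le_antisymm
    · rw [← coe_le_coe]
      intro x hx
      rw [mem_coe] at hx
      rw [mem_coe]
      obtain ⟨s, hs, rfl⟩ := (mem_coeIdeal R⁰).mp hx
      obtain ⟨r, hr⟩ := (key1 s).mp hs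
      refine (hmem_inf _ _ _).mpr ⟨?_, ?_⟩
      · rw [mem_spanSingleton]
        exact ⟨r, by rw [Algebra.smul_def, mul_comm]; exact ((hlink r s).mpr hr).symm⟩
      · exact (mem_one_iff R⁰).mpr ⟨s, rfl⟩
    · rw [← coe_le_coe]
      intro x hx
      rw [mem_coe] at hx
      rw [mem_coe]
      obtain ⟨hx1, hx2⟩ := (hmem_inf _ _ x).mp hx
      obtain ⟨r, hr⟩ := (mem_spanSingleton R⁰).mp hx1
      obtain ⟨s, hs⟩ := (mem_one_iff R⁰).mp hx2
      have heq : y * s = x0 * r := by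
        apply (hlink r s).mp
        rw [hs, ← hr, Algebra.smul_def, mul_comm]
      refine (mem_coeIdeal R⁰).mpr ⟨s, (key1 s).mpr ⟨r, heq⟩, hs⟩
  · -- the set equality
    rw [spanSingleton_one]
    ext x
    simp only [Set.mem_inter_iff, Set.mem_setOf_eq, Set.mem_diff, SetLike.mem_coe]
    constructor
    · rintro ⟨⟨r, hr𝔭, hxr⟩, hx1⟩
      obtain ⟨s, hs⟩ := (mem_one_iff R⁰).mp hx1
      have heq : y * s = x0 * r := (hlink r s).mp (by rw [hs, hxr])
      have hs𝔭v : s ∈ 𝔭.asIdeal ^ v := (key1 s).mpr ⟨r, heq⟩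
      refine ⟨(mem_coeIdeal R⁰).mpr ⟨s, hs𝔭v, hs⟩, ?_⟩
      intro hmem
      obtain ⟨s', hs', hs'x⟩ := (mem_coeIdeal R⁰).mp hmem
      have : s' = s := hinj (by rw [hs'x, hs])
      subst this
      exact hr𝔭 ((key2 r s' heq).mp hs')
    · rintro ⟨hxv, hxv1⟩
      obtain ⟨s, hs, rfl⟩ := (mem_coeIdeal R⁰).mp hxv
      obtain ⟨r, heq⟩ := (key1 s).mp hs
      have hs1 : s ∉ 𝔭.asIdeal ^ (v + 1) := fun h => hxv1 ((mem_coeIdeal R⁰).mpr ⟨s, h, rfl⟩)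
      refine ⟨⟨r, fun hr => hs1 ((key2 r s heq).mpr hr), ((hlink r s).mpr heq)⟩, ?_⟩
      exact (mem_one_iff R⁰).mpr ⟨s, rfl⟩
end
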